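/- arXiv:2302.09739 — 9 statements merged into one kernel-verified Lean document; each statement's English description precedes it below -/
import Mathlib

section
/- For any β > 0, any probability vector p_t ∈ Δ([K]), and any loss vector ℓ_t ∈ ℝ^K satisfying β·p_{t,i}·ℓ_{t,i} ≥ -1/2 for all i, the stability term of log-barrier FTRL satisfies: max over p ∈ Δ([K]) of (⟨p_t - p, ℓ_t⟩ - D_ψ(p, p_t)) ≤ Σ_i β·p_{t,i}²·ℓ_{t,i}², where ψ(p) = (1/β)·Σ_i ln(1/p_i) and D_ψ is the Bregman divergence of ψ. -/
/-!
Per coordinate, write `a = β pᵢ ℓᵢ` and `x = qᵢ / pᵢ`. Then `β` times the `i`-th summand is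
`a (1 - x) - (x - 1 - log x)`, whose supremum over `x > 0` is `a - log (1 + a)`, attained at
`x = 1 / (1 + a)`; and `a - log (1 + a) ≤ a²` as soon as `a ≥ -1/2`.
-/

open Finset Real

lemma sub_sq_le_log_one_add {a : ℝ} (ha : -(1/2) ≤ a) : a - a ^ 2 ≤ log (1 + a) := by
  rw [le_log_iff_exp_le (by linarith)]
  have hexp : exp (a - a ^ 2) * exp (a ^ 2 - a) = 1 := by rw [← exp_add]; simp
  -- With `b = -a`, `(1 - b) (1 + c + c² / 2) = 1 + b² (1 - b - b² - b³) / 2` for `c = b + b²`,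
  -- which is `≥ 1` for `b ≤ 1/2`; for `a ≥ 0`, `(1 + a) (1 + a² - a) = 1 + a³` suffices.
  have key : 1 ≤ (1 + a) * exp (a ^ 2 - a) := by
    rcases le_total 0 a with h | h
    · nlinarith [add_one_le_exp (a ^ 2 - a), pow_nonneg h 3]
    · have hc : 0 ≤ a ^ 2 - a := by nlinarith
      nlinarith [quadratic_le_exp_of_nonneg hc]
  nlinarith [exp_pos (a - a ^ 2)]

lemma mul_one_sub_sub_le_sub_log_one_add {a x : ℝ} (ha : -1 < a) (hx : 0 < x) :
    a * (1 - x) - (x - 1 - log x) ≤ a - log (1 + a) := by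
  have h := log_le_sub_one_of_pos (mul_pos hx (by linarith : 0 < 1 + a))
  rw [log_mul hx.ne' (by linarith)] at h
  linarith

lemma log_barrier_stability_coord {β P Q L : ℝ} (hβ : 0 < β) (hP : 0 < P) (hQ : 0 < Q)
    (hL : -(1/2) ≤ β * P * L) :
    (P - Q) * L - (1/β) * (log (P / Q) + Q / P - 1) ≤ β * P ^ 2 * L ^ 2 := by
  set a := β * P * L with ha
  set x := Q / P with hx
  have hlog : log (P / Q) = - log x := by
    rw [hx, log_div hQ.ne' hP.ne', log_div hP.ne' hQ.ne']; ring
  have hlhs : (P - Q) * L - (1/β) * (log (P / Q) + Q / P - 1)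
      = (1/β) * (a * (1 - x) - (x - 1 - log x)) := by
    rw [hlog, ha, hx]; field_simp; ring
  have hrhs : β * P ^ 2 * L ^ 2 = (1/β) * a ^ 2 := by rw [ha]; field_simp
  rw [hlhs, hrhs]
  gcongr
  linarith [mul_one_sub_sub_le_sub_log_one_add (by linarith : -1 < a) (by positivity : 0 < x),
    sub_sq_le_log_one_add hL]

theorem log_barrier_stability_general (K : ℕ) (β : ℝ) (hβ : 0 < β)
    (p ℓ : Fin K → ℝ) (hp : ∀ i, 0 < p i)
    (hℓ : ∀ i, β * p i * ℓ i ≥ -(1/2))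
    (q : Fin K → ℝ) (hq : ∀ i, 0 < q i) :
    (∑ i, (p i - q i) * ℓ i) -
      (1/β) * (∑ i, (Real.log (p i / q i) + q i / p i - 1))
    ≤ ∑ i, β * (p i)^2 * (ℓ i)^2 := by
  rw [mul_sum, ← sum_sub_distrib]
  exact sum_le_sum fun i _ => log_barrier_stability_coord hβ (hp i) (hq i) (hℓ i)

/-- Stability of the log-barrier FTRL step (Lemma "Stability under log barrier"). -/
theorem log_barrier_stability (K : ℕ) (β : ℝ) (hβ : 0 < β)
    (p ℓ : Fin K → ℝ) (hp : ∀ i, 0 < p i) (hps : ∑ i, p i = 1)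
    (hℓ : ∀ i, β * p i * ℓ i ≥ -(1/2))
    (q : Fin K → ℝ) (hq : ∀ i, 0 < q i) (hqs : ∑ i, q i = 1) :
    (∑ i, (p i - q i) * ℓ i) -
      (1/β) * (∑ i, (Real.log (p i / q i) + q i / p i - 1))
    ≤ ∑ i, β * (p i)^2 * (ℓ i)^2 :=
  log_barrier_stability_general K β hβ p ℓ hp hℓ q hq
end

section
/- Let ψ be the negentropy ψ(p) = Σ_i p_i log p_i, let p_t ∈ Δ([K]) with positive entries, and let ℓ_t ∈ ℝ^K have ℓ_{t,i} > 0 for all i. Then for any η > 0: max over p ∈ ℝ_{≥0}^K of (⟨p_t - p, ℓ_t⟩ - (1/η)·D_ψ(p, p_t)) ≤ (η/2)·Σ_i p_{t,i}·ℓ_{t,i}². -/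
/-!
Coordinatewise, `q ↦ (p - q) x - D(q, p)` is maximised at `q = p e^{-x}`, with maximum
`p (e^{-x} - 1 + x)`; this is Fenchel–Young, i.e. nonnegativity of `D(q, p e^{-x})`.
For `x ≥ 0` the second-order bound `e^{-x} ≤ 1 - x + x²/2` then gives `p x² / 2`, and one
applies this with `x = η ℓ_i` and sums over `i`.
-/

open Real

namespace Real

theorem exp_neg_le_one_sub_add_sq_div_two {x : ℝ} (hx : 0 ≤ x) :
    exp (-x) ≤ 1 - x + x ^ 2 / 2 := by
  -- `(1 - x + x²/2)(1 + x + x²/2) = 1 + x⁴/4`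
  have hpos : 0 < 1 - x + x ^ 2 / 2 := by nlinarith [sq_nonneg (x - 1)]
  have hexp : 1 + x + x ^ 2 / 2 ≤ exp x := quadratic_le_exp_of_nonneg hx
  rw [exp_neg, inv_le_iff_one_le_mul₀ (exp_pos x)]
  nlinarith [mul_le_mul_of_nonneg_left hexp hpos.le, pow_nonneg hx 4]

theorem mul_log_div_sub_add_nonneg {q r : ℝ} (hq : 0 ≤ q) (hr : 0 < r) :
    0 ≤ q * log (q / r) - q + r := by
  have h : r * InformationTheory.klFun (q / r) = q * log (q / r) - q + r := by
    simp only [InformationTheory.klFun]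
    field_simp
    ring
  exact h ▸ mul_nonneg hr.le (InformationTheory.klFun_nonneg (div_nonneg hq hr.le))

end Real

theorem sub_mul_sub_bregman_le {p q : ℝ} (hp : 0 < p) (hq : 0 ≤ q) (x : ℝ) :
    (p - q) * x - (q * log (q / p) - q + p) ≤ p * (exp (-x) - 1 + x) := by
  have hlog : q * log (q / (p * exp (-x))) = q * log (q / p) + q * x := by
    rcases hq.eq_or_lt with rfl | hq
    · simp
    · rw [exp_neg, div_mul_eq_div_div, div_inv_eq_mul,
        log_mul (by positivity) (exp_pos x).ne', log_exp]
      ring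
  have hgibbs := mul_log_div_sub_add_nonneg hq (mul_pos hp (exp_pos (-x)))
  nlinarith

theorem sub_mul_sub_bregman_le_sq {p q x : ℝ} (hp : 0 < p) (hq : 0 ≤ q) (hx : 0 ≤ x) :
    (p - q) * x - (q * log (q / p) - q + p) ≤ p * x ^ 2 / 2 := by
  have := mul_le_mul_of_nonneg_left (exp_neg_le_one_sub_add_sq_div_two hx) hp.le
  linarith [sub_mul_sub_bregman_le hp hq x]

theorem negentropy_stability_pos_general (K : ℕ) (η : ℝ) (hη : 0 < η)
    (p ℓ : Fin K → ℝ) (hp : ∀ i, 0 < p i)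
    (hℓ : ∀ i, 0 < ℓ i)
    (q : Fin K → ℝ) (hq : ∀ i, 0 ≤ q i) :
    (∑ i, (p i - q i) * ℓ i)
      - (1/η) * (∑ i, (q i * Real.log (q i / p i) - q i + p i))
    ≤ (η/2) * ∑ i, p i * (ℓ i)^2 := by
  have coord_le (i : Fin K) : (p i - q i) * ℓ i - (1/η) * (q i * log (q i / p i) - q i + p i)
      ≤ (η/2) * (p i * (ℓ i)^2) := by
    have h := sub_mul_sub_bregman_le_sq (hp i) (hq i) (mul_pos hη (hℓ i)).le
    rw [← mul_le_mul_iff_right₀ hη]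
    field_simp
    linarith
  rw [Finset.mul_sum, Finset.mul_sum, ← Finset.sum_sub_distrib]
  exact Finset.sum_le_sum fun i _ => coord_le i

/-- Stability under negentropy, nonnegative losses. -/
theorem negentropy_stability_pos (K : ℕ) (η : ℝ) (hη : 0 < η)
    (p ℓ : Fin K → ℝ) (hp : ∀ i, 0 < p i) (hps : ∑ i, p i = 1)
    (hℓ : ∀ i, 0 < ℓ i)
    (q : Fin K → ℝ) (hq : ∀ i, 0 ≤ q i) :
    (∑ i, (p i - q i) * ℓ i)
      - (1/η) * (∑ i, (q i * Real.log (q i / p i) - q i + p i))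
    ≤ (η/2) * ∑ i, p i * (ℓ i)^2 :=
  negentropy_stability_pos_general K η hη p ℓ hp hℓ q hq
end

section
/- Let ψ be the negentropy ψ(p) = Σ_i p_i log p_i, let p_t ∈ Δ([K]) with positive entries, let η > 0, and let ℓ_t ∈ ℝ^K satisfy ℓ_{t,i} > -1/η for all i. Then max over p ∈ ℝ_{≥0}^K of (⟨p_t - p, ℓ_t⟩ - (1/η)·D_ψ(p, p_t)) ≤ η·Σ_i p_{t,i}·ℓ_{t,i}². -/
/-!
The objective is separable, so it suffices to bound each coordinate. For fixed `a > 0` and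
`u = η ℓ`, the concave function `x ↦ u (a - x) - (x log (x / a) - x + a)` is maximised at
`x = a e^{-u}`, with value `a (e^{-u} - 1 + u)`; since `u ≥ -1`, this is at most `a u²`.
-/

open Finset Real

lemma Real.exp_neg_le_one_sub_add_sq {x : ℝ} (hx : -1 ≤ x) : exp (-x) ≤ 1 - x + x ^ 2 := by
  rcases le_or_gt x 1 with hx1 | hx1
  · have hx' : |-x| ≤ 1 := by rw [abs_neg, abs_le]; constructor <;> linarith
    linarith [(abs_le.mp (abs_exp_sub_one_sub_id_le hx')).2]
  · calc exp (-x) ≤ 1 := exp_le_one_iff.mpr (by linarith)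
      _ ≤ 1 - x + x ^ 2 := by nlinarith

lemma Real.sub_le_mul_log_div {x c : ℝ} (hx : 0 ≤ x) (hc : 0 < c) :
    x - c ≤ x * log (x / c) := by
  have h := mul_le_mul_of_nonneg_left (self_sub_one_le_mul_log (div_nonneg hx hc.le)) hc.le
  rwa [mul_sub, mul_div_cancel₀ _ hc.ne', mul_one, ← mul_assoc, mul_div_cancel₀ _ hc.ne'] at h

lemma Real.mul_sub_sub_mul_log_div_le {a x : ℝ} (u : ℝ) (ha : 0 < a) (hx : 0 ≤ x) :
    u * (a - x) - (x * log (x / a) - x + a) ≤ a * (exp (-u) - 1 + u) := by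
  set c := a * exp (-u)
  have hc : 0 < c := by positivity
  have hlog : x * log (x / a) = x * log (x / c) - u * x := by
    rcases hx.eq_or_lt with rfl | hx
    · simp
    · have : x / a = x / c * exp (-u) := by simp only [c]; field_simp
      rw [this, log_mul (by positivity) (exp_pos _).ne', log_exp]
      ring
  linarith [sub_le_mul_log_div hx hc]

lemma negentropy_stability_coord {η a x l : ℝ} (hη : 0 < η) (ha : 0 < a)
    (hx : 0 ≤ x) (hl : l > -(1 / η)) :
    (a - x) * l - (1 / η) * (x * log (x / a) - x + a) ≤ η * (a * l ^ 2) := by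
  have hu : -1 ≤ η * l := by
    have := mul_lt_mul_of_pos_left hl hη
    rw [mul_neg, mul_one_div_cancel hη.ne'] at this
    linarith
  have hexp := exp_neg_le_one_sub_add_sq hu
  have hmax := mul_sub_sub_mul_log_div_le (η * l) ha hx
  rw [← mul_le_mul_iff_right₀ hη]
  calc η * ((a - x) * l - (1 / η) * (x * log (x / a) - x + a))
      = η * l * (a - x) - (x * log (x / a) - x + a) := by field_simp
    _ ≤ a * (exp (-(η * l)) - 1 + η * l) := hmax
    _ ≤ a * (η * l) ^ 2 := mul_le_mul_of_nonneg_left (by linarith) ha.le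
    _ = η * (η * (a * l ^ 2)) := by ring

theorem negentropy_stability_lb_general (K : ℕ) (η : ℝ) (hη : 0 < η)
    (p ℓ : Fin K → ℝ) (hp : ∀ i, 0 < p i)
    (hℓ : ∀ i, ℓ i > -(1/η))
    (q : Fin K → ℝ) (hq : ∀ i, 0 ≤ q i) :
    (∑ i, (p i - q i) * ℓ i)
      - (1/η) * (∑ i, (q i * Real.log (q i / p i) - q i + p i))
    ≤ η * ∑ i, p i * (ℓ i)^2 := by
  rw [mul_sum, mul_sum, ← sum_sub_distrib]
  exact sum_le_sum fun i _ ↦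
    negentropy_stability_coord hη (hp i) (hq i) (hℓ i)

/-- Stability under negentropy, losses bounded below by `-1/η`. -/
theorem negentropy_stability_lb (K : ℕ) (η : ℝ) (hη : 0 < η)
    (p ℓ : Fin K → ℝ) (hp : ∀ i, 0 < p i) (hps : ∑ i, p i = 1)
    (hℓ : ∀ i, ℓ i > -(1/η))
    (q : Fin K → ℝ) (hq : ∀ i, 0 ≤ q i) :
    (∑ i, (p i - q i) * ℓ i)
      - (1/η) * (∑ i, (q i * Real.log (q i / p i) - q i + p i))
    ≤ η * ∑ i, p i * (ℓ i)^2 :=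
  negentropy_stability_lb_general K η hη p ℓ hp hℓ q hq
end

section
/- Let α ∈ (0,1) and consider the Tsallis potential ψ(p) = -Σ_i p_i^α / (α(1-α)). For any p_t ∈ Δ([K]) with positive entries, any nonnegative loss ℓ_t ≥ 0, and any η > 0: max over p ≥ 0 of (⟨p_t - p, ℓ_t⟩ - (1/η)·D_ψ(p, p_t)) ≤ (η/2)·Σ_i p_{t,i}^{2-α}·ℓ_{t,i}². -/
open Finset Real
open Set


lemma tangent_concave {a p q : ℝ} (hp : 0 < p) (hq : 0 ≤ q) (ha0 : 0 ≤ a) (ha1 : a ≤ 1) :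
    q ^ a ≤ p ^ a + a * p ^ (a - 1) * (q - p) := by
  have hs : -1 ≤ q / p - 1 := by
    have : 0 ≤ q / p := div_nonneg hq hp.le
    linarith
  have hb := rpow_one_add_le_one_add_mul_self hs ha0 ha1
  rw [show (1 + (q / p - 1)) = q / p by ring, Real.div_rpow hq hp.le] at hb
  have hpa : 0 < p ^ a := Real.rpow_pos_of_pos hp a
  have h1 : q ^ a ≤ (1 + a * (q / p - 1)) * p ^ a := (div_le_iff₀ hpa).mp hb
  have h2 : p ^ (a - 1) = p ^ a / p := Real.rpow_sub_one hp.ne' a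
  have e1 : (q - p) / p = q / p - 1 := by field_simp
  calc q ^ a ≤ (1 + a * (q / p - 1)) * p ^ a := h1
    _ = p ^ a + a * (p ^ a) * ((q - p) / p) := by rw [e1]; ring
    _ = p ^ a + a * (p ^ a / p) * (q - p) := by ring
    _ = p ^ a + a * p ^ (a - 1) * (q - p) := by rw [h2]

lemma tangent_convex {a p q : ℝ} (hp : 0 < p) (hq : 0 < q) (hqp : q ≤ p)
    (ha0 : 0 < a) (ha1 : a < 1) :
    p ^ (a - 1) + (a - 1) * p ^ (a - 2) * (q - p) ≤ q ^ (a - 1) := by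
  set t := q / p with ht
  have htpos : 0 < t := div_pos hq hp
  have ht1 : t ≤ 1 := (div_le_one hp).mpr hqp
  have key : 1 + (1 - a) * (1 - t) ≤ t ^ (a - 1) := by
    have hb : t ^ (1 - a) ≤ 1 + (1 - a) * (t - 1) := by
      have hs : -1 ≤ t - 1 := by linarith
      have := rpow_one_add_le_one_add_mul_self hs
        (by linarith : (0:ℝ) ≤ 1 - a) (by linarith)
      simpa using this
    have htpow : 0 < t ^ (1 - a) := Real.rpow_pos_of_pos htpos _
    have hcpos : (0:ℝ) < 1 + (1 - a) * (1 - t) := by nlinarith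
    have h3 : (1 + (1 - a) * (1 - t)) * t ^ (1 - a) ≤ 1 := by
      have hsq : (1 + (1 - a) * (1 - t)) * (1 + (1 - a) * (t - 1)) ≤ 1 := by
        nlinarith [sq_nonneg ((1 - a) * (1 - t))]
      have := mul_le_mul_of_nonneg_left hb hcpos.le
      linarith
    have h4 : t ^ (a - 1) = (t ^ (1 - a))⁻¹ := by
      rw [show a - 1 = -(1 - a) by ring, Real.rpow_neg htpos.le]
    rw [h4, ← one_div]
    exact (le_div_iff₀ htpow).mpr h3
  have hpa : 0 < p ^ (a - 1) := Real.rpow_pos_of_pos hp _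
  have hmul := mul_le_mul_of_nonneg_left key hpa.le
  have hq1 : p ^ (a - 1) * t ^ (a - 1) = q ^ (a - 1) := by
    rw [ht, Real.div_rpow hq.le hp.le, mul_div_cancel₀ _ (Real.rpow_pos_of_pos hp _).ne']
  have h2 : p ^ (a - 2) = p ^ (a - 1) / p := by
    rw [show a - 2 = (a - 1) - 1 by ring, Real.rpow_sub_one hp.ne']
  rw [hq1] at hmul
  have e1 : (q - p) / p = t - 1 := by rw [ht]; field_simp
  calc p ^ (a - 1) + (a - 1) * p ^ (a - 2) * (q - p)
      = p ^ (a - 1) + (a - 1) * (p ^ (a - 1) / p) * (q - p) := by rw [h2]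
    _ = p ^ (a - 1) + (a - 1) * p ^ (a - 1) * ((q - p) / p) := by ring
    _ = p ^ (a - 1) * (1 + (1 - a) * (1 - t)) := by rw [e1]; ring
    _ ≤ q ^ (a - 1) := hmul


lemma breg_nonneg {a P Q : ℝ} (hP : 0 < P) (hQ : 0 ≤ Q) (ha0 : 0 < a) (ha1 : a < 1) :
    0 ≤ (P ^ a - Q ^ a) / (a * (1 - a)) + P ^ (a - 1) * (Q - P) / (1 - a) := by
  have h := tangent_concave hP hQ ha0.le ha1.le
  have e2 : P ^ (a - 1) * (Q - P) / (1 - a)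
      = (a * (P ^ (a - 1) * (Q - P))) / (a * (1 - a)) :=
    (mul_div_mul_left _ _ (ne_of_gt ha0)).symm
  rw [e2, ← add_div]
  apply div_nonneg (by nlinarith) (by nlinarith)

lemma breg_quad {a P Q : ℝ} (hP : 0 < P) (hQ : 0 ≤ Q) (hQP : Q ≤ P)
    (ha0 : 0 < a) (ha1 : a < 1) :
    (1/2) * (P - Q)^2 * P ^ (a - 2)
      ≤ (P ^ a - Q ^ a) / (a * (1 - a)) + P ^ (a - 1) * (Q - P) / (1 - a) := by
  set g : ℝ → ℝ := fun x =>
    (P ^ a - x ^ a) / (a * (1 - a)) + P ^ (a - 1) * (x - P) / (1 - a)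
      - (1/2) * (P - x)^2 * P ^ (a - 2) with hg
  have hanti : AntitoneOn g (Icc 0 P) := by
    apply antitoneOn_of_hasDerivWithinAt_nonpos (f' := fun x =>
        (P ^ (a-1) - x ^ (a-1)) / (1 - a) + (P - x) * P ^ (a - 2))
      (convex_Icc 0 P)
    · apply ContinuousOn.sub
      apply ContinuousOn.add
      · exact (continuousOn_const.sub (fun x _ =>
          (Real.continuousAt_rpow_const x a (Or.inr ha0.le)).continuousWithinAt)).div_const _
      · exact (continuousOn_const.mul (continuousOn_id.sub continuousOn_const)).div_const _
      · exact (continuousOn_const.mul ((continuousOn_const.sub continuousOn_id).pow 2)).mul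
          continuousOn_const
    · intro x hx
      rw [interior_Icc] at hx
      have hx0 : x ≠ 0 := ne_of_gt hx.1
      have d1 : HasDerivAt (fun y : ℝ => (P ^ a - y ^ a) / (a * (1 - a)))
          (-(a * x ^ (a-1)) / (a * (1 - a))) x :=
        (((Real.hasDerivAt_rpow_const (Or.inl hx0))).const_sub _).div_const _
      have d2 : HasDerivAt (fun y : ℝ => P ^ (a - 1) * (y - P) / (1 - a))
          (P ^ (a-1) / (1 - a)) x := by
        have h0 : HasDerivAt (fun y : ℝ => y - P) 1 x := (hasDerivAt_id x).sub_const _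
        simpa using ((h0.const_mul (P ^ (a-1))).div_const (1 - a))
      have d3 : HasDerivAt (fun y : ℝ => (1/2) * (P - y)^2 * P ^ (a - 2))
          ((1/2) * (2 * (P - x) * (-1)) * P ^ (a - 2)) x := by
        have h0 : HasDerivAt (fun y : ℝ => P - y) (-1) x := (hasDerivAt_id x).const_sub P
        have h1 : HasDerivAt (fun y : ℝ => (P - y)^2) (2 * (P - x) * (-1)) x := by
          simpa using h0.fun_pow 2
        simpa [mul_comm, mul_assoc, mul_left_comm] using
          (h1.const_mul (1/2 : ℝ)).mul_const (P ^ (a-2))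
      have hD := (d1.add d2).sub d3
      have e0 : -(a * x ^ (a-1)) / (a * (1 - a)) = -x ^ (a-1) / (1 - a) := by
        rw [show -(a * x ^ (a-1)) = a * (-x ^ (a-1)) by ring,
          mul_div_mul_left _ _ (ne_of_gt ha0)]
      have heq : -(a * x ^ (a-1)) / (a * (1 - a)) + P ^ (a-1) / (1 - a)
          - (1/2) * (2 * (P - x) * (-1)) * P ^ (a - 2)
          = (P ^ (a-1) - x ^ (a-1)) / (1 - a) + (P - x) * P ^ (a - 2) := by
        rw [e0]; ring
      rw [heq] at hD
      rw [interior_Icc]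
      exact hD.hasDerivWithinAt
    · intro x hx
      rw [interior_Icc] at hx
      have ht := tangent_convex hP hx.1 hx.2.le ha0 ha1
      have hPa2 : (0:ℝ) ≤ P ^ (a - 2) := (Real.rpow_pos_of_pos hP _).le
      rw [div_add' _ _ _ (by linarith : (1:ℝ) - a ≠ 0)]
      apply div_nonpos_of_nonpos_of_nonneg _ (by linarith)
      nlinarith
  have hgP : g P = 0 := by simp [hg]
  have hgQ := hanti ⟨hQ, hQP⟩ ⟨le_of_lt hP, le_refl P⟩ hQP
  rw [hgP] at hgQ
  simp only [hg] at hgQ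
  linarith

lemma coord {a η P Q L : ℝ} (hP : 0 < P) (hQ : 0 ≤ Q) (hL : 0 ≤ L) (hη : 0 < η)
    (ha0 : 0 < a) (ha1 : a < 1) :
    (P - Q) * L - (1/η) * ((P ^ a - Q ^ a) / (a * (1 - a)) + P ^ (a - 1) * (Q - P) / (1 - a))
      ≤ (η/2) * (P ^ (2 - a) * L^2) := by
  have hB : 0 < P ^ (2 - a) := Real.rpow_pos_of_pos hP _
  have hA : 0 < P ^ (a - 2) := Real.rpow_pos_of_pos hP _
  have hAB : P ^ (a - 2) * P ^ (2 - a) = 1 := by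
    rw [← Real.rpow_add hP]; norm_num
  rcases le_or_gt P Q with hc | hc
  · have h1 : (P - Q) * L ≤ 0 := mul_nonpos_of_nonpos_of_nonneg (by linarith) hL
    have h2 := breg_nonneg (Q := Q) hP hQ ha0 ha1
    have h3 : 0 ≤ (η/2) * (P ^ (2 - a) * L^2) := by positivity
    have h4 : 0 ≤ (1/η) * ((P ^ a - Q ^ a) / (a * (1 - a)) + P ^ (a - 1) * (Q - P) / (1 - a)) := by
      positivity
    linarith
  · have h2 := breg_quad hP hQ hc.le ha0 ha1
    have hA2B : P ^ (a-2) * P ^ (a-2) * P ^ (2-a) = P ^ (a-2) := by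
      rw [mul_assoc, hAB, mul_one]
    have hexp : 0 ≤ P ^ (2-a) * (P ^ (a-2) * (P - Q) - η * L)^2 := by positivity
    have hexp2 : P ^ (2-a) * (P ^ (a-2) * (P - Q) - η * L)^2
        = (P ^ (a-2) * P ^ (a-2) * P ^ (2-a)) * (P - Q)^2
          - 2 * (P ^ (a-2) * P ^ (2-a)) * η * ((P - Q) * L)
          + P ^ (2-a) * η^2 * L^2 := by ring
    rw [hexp2, hA2B, hAB] at hexp
    have hkey2 : 2 * η * ((P - Q) * L)
        ≤ P ^ (a-2) * (P - Q)^2 + η^2 * (P ^ (2-a) * L^2) := by linarith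
    have key : (P - Q) * L ≤ (1/η) * ((1/2) * (P - Q)^2 * P ^ (a - 2))
        + (η/2) * (P ^ (2 - a) * L^2) := by
      rw [← sub_nonneg]
      have expand : (1/η) * ((1/2) * (P - Q)^2 * P ^ (a - 2)) + (η/2) * (P ^ (2 - a) * L^2)
          - (P - Q) * L
          = (1/(2*η)) * ((P ^ (a-2) * (P - Q)^2 + η^2 * (P ^ (2-a) * L^2))
              - 2 * η * ((P - Q) * L)) := by
        field_simp
      rw [expand]
      exact mul_nonneg (by positivity) (by linarith)
    have h5 : (1/η) * ((1/2) * (P - Q)^2 * P ^ (a - 2))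
        ≤ (1/η) * ((P ^ a - Q ^ a) / (a * (1 - a)) + P ^ (a - 1) * (Q - P) / (1 - a)) :=
      mul_le_mul_of_nonneg_left h2 (by positivity)
    linarith

/-- Stability of Tsallis-INF. -/
theorem tsallis_stability (K : ℕ) (α η : ℝ) (hα0 : 0 < α) (hα1 : α < 1) (hη : 0 < η)
    (p ℓ : Fin K → ℝ) (hp : ∀ i, 0 < p i) (hps : ∑ i, p i = 1)
    (hℓ : ∀ i, 0 ≤ ℓ i)
    (q : Fin K → ℝ) (hq : ∀ i, 0 ≤ q i) :
    (∑ i, (p i - q i) * ℓ i)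
      - (1/η) * (∑ i, ((p i ^ α - q i ^ α) / (α * (1 - α))
          + p i ^ (α - 1) * (q i - p i) / (1 - α)))
    ≤ (η/2) * ∑ i, p i ^ (2 - α) * (ℓ i)^2 := by
  rw [Finset.mul_sum, Finset.mul_sum, ← Finset.sum_sub_distrib]
  exact Finset.sum_le_sum fun i _ => coord (hp i) (hq i) (hℓ i) hη hα0 hα1
end

section
/- Let Δ ∈ (0,1], c, c', X ≥ 1, C ≥ 0, and α ∈ (0,1). Then min over λ ∈ [0,1] of ((1/2)·c^{1-α}·X^α + (1/2)·c'·log X - λ·(X·Δ - C)) ≤ c·Δ^{-α/(1-α)} + 2·c^{1-α}·(C/Δ)^α + 2·c'·log(1 + (c' + C)/Δ). -/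
open Real

/-! If `X Δ ≤ 4 C` then `X` is at most `4 (c' + C) / Δ`, so already `λ = 0` gives the bound.
Otherwise take `λ = 1`: the reward `X Δ - C` exceeds `3 X Δ / 4`, and it absorbs both the power
term, through weighted AM-GM with `X Δ` as one of the two factors, and the logarithm, through
`log x ≤ x / s + log s` with the scale `s = 4 c' / Δ`. -/

namespace Real

theorem mul_rpow_le_mul_rpow_of_one_le {k y α : ℝ} (hk : 1 ≤ k) (hy : 0 ≤ y)
    (hα : α ≤ 1) : (k * y) ^ α ≤ k * y ^ α := by
  rw [mul_rpow (by linarith) hy]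
  gcongr
  exact rpow_le_self_of_one_le hk hα

theorem rpow_mul_rpow_le_scaled {a b t α : ℝ} (ha : 0 ≤ a) (hb : 0 ≤ b) (ht : 0 < t)
    (hα0 : 0 ≤ α) (hα1 : α < 1) :
    a ^ (1 - α) * b ^ α ≤ (1 - α) * (a * t ^ (-(α / (1 - α)))) + α * (b * t) := by
  have htpow : 0 ≤ t ^ (-(α / (1 - α))) := rpow_nonneg ht.le _
  have hrescale :
      (a * t ^ (-(α / (1 - α)))) ^ (1 - α) * (b * t) ^ α = a ^ (1 - α) * b ^ α := by
    have hexp : (t ^ (-(α / (1 - α)))) ^ (1 - α) = (t ^ α)⁻¹ := by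
      rw [← rpow_mul ht.le, ← rpow_neg ht.le]
      congr 1
      field_simp [(sub_pos.2 hα1).ne']
    rw [mul_rpow ha htpow, mul_rpow hb ht.le, hexp]
    field_simp [(rpow_pos_of_pos ht α).ne']
  rw [← hrescale]
  exact geom_mean_le_arith_mean2_weighted (by linarith) hα0 (mul_nonneg ha htpow)
    (mul_nonneg hb ht.le) (by ring)

theorem log_le_div_add_log {x s : ℝ} (hx : 0 < x) (hs : 0 < s) : log x ≤ x / s + log s := by
  have h := log_le_sub_one_of_pos (div_pos hx hs)
  rw [log_div hx.ne' hs.ne'] at h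
  linarith

theorem log_le_two_mul_log_one_add {x u : ℝ} (hx : 0 < x) (hxu : x ≤ 4 * u) :
    log x ≤ 2 * log (1 + u) := by
  calc log x ≤ log ((1 + u) ^ 2) := log_le_log hx (by nlinarith [sq_nonneg (1 - u)])
    _ = 2 * log (1 + u) := by rw [log_pow]; norm_num

end Real

theorem self_bounding_min_general (α Δ c c' X C : ℝ) (hα0 : 0 < α) (hα1 : α < 1)
    (hΔ0 : 0 < Δ) (hc : 1 ≤ c) (hc' : 1 ≤ c') (hX : 1 ≤ X) (hC : 0 ≤ C) :
    ∃ lam : ℝ, lam ∈ Set.Icc (0:ℝ) 1 ∧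
      (1/2) * c ^ (1 - α) * X ^ α + (1/2) * c' * Real.log X - lam * (X * Δ - C)
      ≤ c * Δ ^ (-(α / (1 - α))) + 2 * c ^ (1 - α) * (C / Δ) ^ α
        + 2 * c' * Real.log (1 + (c' + C) / Δ) := by
  have hCu : C / Δ ≤ (c' + C) / Δ := by gcongr; linarith
  have hc'u : c' / Δ ≤ (c' + C) / Δ := by gcongr; linarith
  set u := (c' + C) / Δ
  have hX0 : 0 < X := by linarith
  have hcpow : 0 ≤ c ^ (1 - α) := rpow_nonneg (by linarith) _
  have hCΔpow : 0 ≤ c ^ (1 - α) * (C / Δ) ^ α :=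
    mul_nonneg hcpow (rpow_nonneg (by positivity) _)
  have hΔpow : 0 ≤ c * Δ ^ (-(α / (1 - α))) :=
    mul_nonneg (by linarith) (rpow_nonneg hΔ0.le _)
  have hlog_u : 0 ≤ c' * log (1 + u) :=
    mul_nonneg (by linarith) (log_nonneg (by linarith [div_nonneg hC hΔ0.le]))
  by_cases hsmall : X * Δ ≤ 4 * C
  · refine ⟨0, ⟨le_rfl, zero_le_one⟩, ?_⟩
    have hXC : X ≤ 4 * (C / Δ) := by rw [mul_div_assoc', le_div_iff₀ hΔ0]; exact hsmall
    have hpow : X ^ α ≤ 4 * (C / Δ) ^ α :=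
      (rpow_le_rpow hX0.le hXC hα0.le).trans
        (mul_rpow_le_mul_rpow_of_one_le (by norm_num) (by positivity) hα1.le)
    have hlog : log X ≤ 2 * log (1 + u) := log_le_two_mul_log_one_add hX0 (by linarith)
    nlinarith [mul_le_mul_of_nonneg_left hpow hcpow,
      mul_le_mul_of_nonneg_left hlog (by linarith : 0 ≤ c')]
  · refine ⟨1, ⟨zero_le_one, le_rfl⟩, ?_⟩
    have hpow := rpow_mul_rpow_le_scaled (a := c) (by linarith) hX0.le hΔ0 hα0.le hα1
    have hlog := log_le_div_add_log hX0 (by positivity : 0 < 4 * c' / Δ)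
    have hlog_scale : log (4 * c' / Δ) ≤ 2 * log (1 + u) :=
      log_le_two_mul_log_one_add (by positivity) (by rw [mul_div_assoc]; linarith)
    have hXΔ : c' * (X / (4 * c' / Δ)) = X * Δ / 4 := by field_simp
    nlinarith [mul_le_mul_of_nonneg_left hlog (by linarith : 0 ≤ c')]

/-- Self-bounding optimization lemma. -/
theorem self_bounding_min (α Δ c c' X C : ℝ) (hα0 : 0 < α) (hα1 : α < 1)
    (hΔ0 : 0 < Δ) (hΔ1 : Δ ≤ 1) (hc : 1 ≤ c) (hc' : 1 ≤ c') (hX : 1 ≤ X) (hC : 0 ≤ C) :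
    ∃ lam : ℝ, lam ∈ Set.Icc (0:ℝ) 1 ∧
      (1/2) * c ^ (1 - α) * X ^ α + (1/2) * c' * Real.log X - lam * (X * Δ - C)
      ≤ c * Δ ^ (-(α / (1 - α))) + 2 * c ^ (1 - α) * (C / Δ) ^ α
        + 2 * c' * Real.log (1 + (c' + C) / Δ) :=
  self_bounding_min_general α Δ c c' X C hα0 hα1 hΔ0 hc hc' hX hC
end

section
/- Let G = (V, E) be a directed graph with independence number α and strictly positive vertex weights p_i > 0. Then there exists a vertex i ∈ V such that p_i / (p_i + Σ_{j : (j,i) ∈ E} p_j) ≤ 2·p_i·α / (Σ_i p_i). Equivalently, after normalizing so that p ∈ Δ(V): min over i of (p_i + Σ_{j:(j,i)∈E} p_j) ≥ 1/(2α). -/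
/-!
Let `G` be the undirected graph underlying `E` and `N[i]` the closed neighbourhood of `i` in it;
write `P = ∑ p` and `w i` for the in-neighbourhood weight of `i`. Greedily removing closed
neighbourhoods of minimal weight gives the weighted Caro–Wei bound `∑ p i / p(N[i]) ≤ α`, so by
Cauchy–Schwarz (Titu's form) `P² ≤ α ∑ p i * p(N[i])`. Every undirected edge is an in-edge of one
of its endpoints, hence `∑ p i * p(N[i]) ≤ 2 ∑ p i * (p i + w i)`. Thus the `p`-weighted average
of `p i + w i` is at least `P / (2α)`, and some vertex attains it.
-/

open Finset

namespace SimpleGraph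

variable {V : Type*} [DecidableEq V] (G : SimpleGraph V) [DecidableRel G.Adj]

def closedNbhdWithin (T : Finset V) (i : V) : Finset V := {j ∈ T | j = i ∨ G.Adj i j}

variable {G}

@[simp]
lemma mem_closedNbhdWithin {T : Finset V} {i j : V} :
    j ∈ G.closedNbhdWithin T i ↔ j ∈ T ∧ (j = i ∨ G.Adj i j) := mem_filter

lemma self_mem_closedNbhdWithin {T : Finset V} {i : V} (hi : i ∈ T) :
    i ∈ G.closedNbhdWithin T i := mem_closedNbhdWithin.2 ⟨hi, .inl rfl⟩

lemma closedNbhdWithin_mono {T T' : Finset V} (h : T' ⊆ T) (i : V) :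
    G.closedNbhdWithin T' i ⊆ G.closedNbhdWithin T i := filter_subset_filter _ h

lemma closedNbhdWithin_subset (T : Finset V) (i : V) : G.closedNbhdWithin T i ⊆ T :=
  filter_subset _ _

lemma sum_closedNbhdWithin_pos {q : V → ℝ} (hq : ∀ i, 0 < q i) {T : Finset V} {i : V}
    (hi : i ∈ T) : 0 < ∑ j ∈ G.closedNbhdWithin T i, q j :=
  sum_pos (fun j _ => hq j) ⟨i, self_mem_closedNbhdWithin hi⟩

lemma isIndepSet_insert_of_subset_sdiff_closedNbhdWithin {T S : Finset V} {v : V}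
    (hS : S ⊆ T \ G.closedNbhdWithin T v) (hind : G.IsIndepSet (S : Set V)) :
    G.IsIndepSet (insert v S : Finset V) := by
  rw [coe_insert]
  refine hind.insert fun b hb _ => ?_
  have hb' := hS hb
  simp only [mem_sdiff, mem_closedNbhdWithin, not_and, not_or] at hb'
  exact ⟨(hb'.2 hb'.1).2, fun h => (hb'.2 hb'.1).2 h.symm⟩

lemma sum_div_sum_closedNbhdWithin_le_one {q : V → ℝ} (hq : ∀ i, 0 < q i) {T : Finset V}
    {v : V} (hv : v ∈ T)
    (hmin : ∀ i ∈ T, ∑ j ∈ G.closedNbhdWithin T v, q j ≤ ∑ j ∈ G.closedNbhdWithin T i, q j) :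
    ∑ i ∈ G.closedNbhdWithin T v, q i / ∑ j ∈ G.closedNbhdWithin T i, q j ≤ 1 := by
  have hpos := sum_closedNbhdWithin_pos (G := G) hq hv
  calc ∑ i ∈ G.closedNbhdWithin T v, q i / ∑ j ∈ G.closedNbhdWithin T i, q j
      ≤ ∑ i ∈ G.closedNbhdWithin T v, q i / ∑ j ∈ G.closedNbhdWithin T v, q j :=
        sum_le_sum fun i hi => div_le_div_of_nonneg_left (hq i).le hpos
          (hmin i (closedNbhdWithin_subset T v hi))
    _ = 1 := by rw [← sum_div, div_self hpos.ne']

theorem sum_div_sum_closedNbhdWithin_le {q : V → ℝ} (hq : ∀ i, 0 < q i) (T : Finset V)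
    (a : ℕ) (ha : ∀ S ⊆ T, G.IsIndepSet (S : Set V) → #S ≤ a) :
    ∑ i ∈ T, q i / ∑ j ∈ G.closedNbhdWithin T i, q j ≤ a := by
  induction T using Finset.strongInduction generalizing a with
  | _ T ih =>
  rcases T.eq_empty_or_nonempty with rfl | hT
  · simp
  obtain ⟨v, hv, hmin⟩ := T.exists_min_image (fun i => ∑ j ∈ G.closedNbhdWithin T i, q j) hT
  obtain ⟨b, rfl⟩ : ∃ b, a = b + 1 :=
    Nat.exists_eq_add_one.2 (ha {v} (by simpa using hv) (by simp))
  set T' := T \ G.closedNbhdWithin T v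
  have hT' : T' ⊂ T := sdiff_ssubset (closedNbhdWithin_subset T v)
    ⟨v, self_mem_closedNbhdWithin hv⟩
  have hrest : ∑ i ∈ T', q i / ∑ j ∈ G.closedNbhdWithin T i, q j ≤ b :=
    calc ∑ i ∈ T', q i / ∑ j ∈ G.closedNbhdWithin T i, q j
        ≤ ∑ i ∈ T', q i / ∑ j ∈ G.closedNbhdWithin T' i, q j :=
          sum_le_sum fun i hi => div_le_div_of_nonneg_left (hq i).le
            (sum_closedNbhdWithin_pos hq hi)
            (sum_le_sum_of_subset_of_nonneg (closedNbhdWithin_mono hT'.subset i)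
              fun j _ _ => (hq j).le)
      _ ≤ b := ih T' hT' b fun S hS hind => by
          have hvS : v ∉ S := fun h => (mem_sdiff.1 (hS h)).2 (self_mem_closedNbhdWithin hv)
          have := ha (insert v S)
            (insert_subset hv (hS.trans sdiff_subset))
            (isIndepSet_insert_of_subset_sdiff_closedNbhdWithin (G := G) hS hind)
          rw [card_insert_of_notMem hvS] at this
          omega
  rw [← sum_sdiff (closedNbhdWithin_subset (G := G) T v)]
  push_cast
  linarith [sum_div_sum_closedNbhdWithin_le_one (G := G) hq hv hmin]

theorem sq_sum_le_mul_sum_mul_sum_closedNbhdWithin {q : V → ℝ} (hq : ∀ i, 0 < q i)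
    (T : Finset V) (a : ℕ) (ha : ∀ S ⊆ T, G.IsIndepSet (S : Set V) → #S ≤ a) :
    (∑ i ∈ T, q i) ^ 2 ≤ a * ∑ i ∈ T, q i * ∑ j ∈ G.closedNbhdWithin T i, q j := by
  rcases T.eq_empty_or_nonempty with rfl | hT
  · simp
  have hpos : ∀ i ∈ T, 0 < q i * ∑ j ∈ G.closedNbhdWithin T i, q j :=
    fun i hi => mul_pos (hq i) (sum_closedNbhdWithin_pos hq hi)
  have htitu := sq_sum_div_le_sum_sq_div T q hpos
  have hsq : ∀ i ∈ T, q i ^ 2 / (q i * ∑ j ∈ G.closedNbhdWithin T i, q j) =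
      q i / ∑ j ∈ G.closedNbhdWithin T i, q j := fun i _ => by
    rw [sq, mul_div_mul_left _ _ (hq i).ne']
  rw [sum_congr rfl hsq, div_le_iff₀ (sum_pos hpos hT)] at htitu
  exact htitu.trans (mul_le_mul_of_nonneg_right (sum_div_sum_closedNbhdWithin_le hq T a ha)
    (sum_pos hpos hT).le)

end SimpleGraph

section Digraph

variable {V : Type*} [Fintype V] (E : V → V → Prop) [DecidableRel E]

lemma sum_mul_sum_filter_comm (p : V → ℝ) :
    ∑ i, p i * ∑ j with E i j, p j = ∑ i, p i * ∑ j with E j i, p j := by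
  simp only [sum_filter, mul_sum, mul_ite, mul_zero]
  rw [sum_comm]
  exact sum_congr rfl fun i _ => sum_congr rfl fun j _ => by rw [mul_comm]

lemma sum_closedNbhdWithin_fromRel_le [DecidableEq V] [DecidableRel (SimpleGraph.fromRel E).Adj]
    {p : V → ℝ} (hp : ∀ i, 0 ≤ p i) (i : V) :
    ∑ j ∈ (SimpleGraph.fromRel E).closedNbhdWithin univ i, p j ≤
      p i + ∑ j with E j i, p j + ∑ j with E i j, p j := by
  have hself : p i = ∑ j, if j = i then p j else 0 := by simp
  rw [hself]
  simp only [SimpleGraph.closedNbhdWithin, sum_filter, ← sum_add_distrib]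
  refine sum_le_sum fun j _ => ?_
  have := hp j
  split_ifs <;> simp_all [SimpleGraph.fromRel_adj]

lemma sum_mul_sum_closedNbhdWithin_fromRel_le [DecidableEq V]
    [DecidableRel (SimpleGraph.fromRel E).Adj] {p : V → ℝ} (hp : ∀ i, 0 ≤ p i) :
    ∑ i, p i * ∑ j ∈ (SimpleGraph.fromRel E).closedNbhdWithin univ i, p j ≤
      2 * ∑ i, p i * (p i + ∑ j with E j i, p j) :=
  calc ∑ i, p i * ∑ j ∈ (SimpleGraph.fromRel E).closedNbhdWithin univ i, p j
      ≤ ∑ i, p i * (p i + ∑ j with E j i, p j + ∑ j with E i j, p j) :=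
        sum_le_sum fun i _ => mul_le_mul_of_nonneg_left
          (sum_closedNbhdWithin_fromRel_le E hp i) (hp i)
    _ = ∑ i, p i * p i + 2 * ∑ i, p i * ∑ j with E j i, p j := by
        simp only [mul_add, sum_add_distrib, sum_mul_sum_filter_comm E p]
        ring
    _ ≤ 2 * ∑ i, p i * (p i + ∑ j with E j i, p j) := by
        have : 0 ≤ ∑ i, p i * p i := sum_nonneg fun i _ => mul_self_nonneg (p i)
        simp only [mul_add, sum_add_distrib]
        linarith

end Digraph

theorem refined_graph_sum_general {V : Type*} [Fintype V] [Nonempty V]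
    (E : V → V → Prop) [DecidableRel E] (αG : ℕ)
    (hub : ∀ S : Finset V,
      (∀ i ∈ S, ∀ j ∈ S, i ≠ j → ¬ E i j ∧ ¬ E j i) → S.card ≤ αG)
    (p : V → ℝ) (hp : ∀ i, 0 < p i) :
    ∃ i : V,
      p i / (p i + ∑ j ∈ Finset.univ.filter (fun j => E j i), p j)
        ≤ 2 * p i * (αG : ℝ) / (∑ j, p j) := by
  classical
  have hindep : ∀ S ⊆ univ, (SimpleGraph.fromRel E).IsIndepSet (S : Set V) → #S ≤ αG :=
    fun S _ hS => hub S fun i hi j hj hij => by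
      simpa [SimpleGraph.fromRel_adj, hij, not_or] using hS hi hj hij
  have hweighted : ∑ i, p i * ∑ j, p j ≤ ∑ i, p i * (2 * αG * (p i + ∑ j with E j i, p j)) := by
    calc ∑ i, p i * ∑ j, p j = (∑ j, p j) ^ 2 := by rw [← sum_mul, sq]
      _ ≤ αG * (2 * ∑ i, p i * (p i + ∑ j with E j i, p j)) :=
        (SimpleGraph.sq_sum_le_mul_sum_mul_sum_closedNbhdWithin hp univ αG hindep).trans
          (mul_le_mul_of_nonneg_left
            (sum_mul_sum_closedNbhdWithin_fromRel_le E fun i => (hp i).le) (Nat.cast_nonneg _))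
      _ = _ := by simp only [mul_sum]; exact sum_congr rfl fun i _ => by ring
  obtain ⟨i, -, hi⟩ := exists_le_of_sum_le univ_nonempty hweighted
  refine ⟨i, ?_⟩
  rw [div_le_div_iff₀ (add_pos_of_pos_of_nonneg (hp i) (sum_nonneg fun j _ => (hp j).le))
    (sum_pos (fun j _ => hp j) univ_nonempty)]
  linear_combination hi

/-- Refined graph sum lemma: in a directed graph with independence number `αG`
and positive vertex weights, some vertex satisfies
`p i / (p i + ∑_{j:(j,i)∈E} p j) ≤ 2 p i αG / ∑ p`. -/
theorem refined_graph_sum {V : Type*} [Fintype V] [DecidableEq V] [Nonempty V]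
    (E : V → V → Prop) [DecidableRel E] (αG : ℕ)
    (hub : ∀ S : Finset V,
      (∀ i ∈ S, ∀ j ∈ S, i ≠ j → ¬ E i j ∧ ¬ E j i) → S.card ≤ αG)
    (hach : ∃ S : Finset V,
      (∀ i ∈ S, ∀ j ∈ S, i ≠ j → ¬ E i j ∧ ¬ E j i) ∧ S.card = αG)
    (p : V → ℝ) (hp : ∀ i, 0 < p i) :
    ∃ i : V,
      p i / (p i + ∑ j ∈ Finset.univ.filter (fun j => E j i), p j)
        ≤ 2 * p i * (αG : ℝ) / (∑ j, p j) :=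
  refined_graph_sum_general E αG hub p hp
end

section
/- Under the setup of the previous identity, assume additionally that V_G(α) has rank d - 1 (full rank over span(X)). Then the inverse of V_H(α) is given by V_H(α)^{-1} = (1/(1-α_{x̂}))·(V_G(α)^+ + V_G(α)^+ μ_G(α) x̂^⊤ + x̂ μ_G(α)^⊤ V_G(α)^+ + (‖μ_G(α)‖²_{V_G(α)^+} + 1/α_{x̂})·x̂ x̂^⊤), where V_G(α)^+ is the Moore–Penrose pseudo-inverse. In particular, ‖x̂ - μ_G(α)‖²_{V_H(α)^{-1}} = 1/((1-α_{x̂})·α_{x̂}). -/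
open Finset Matrix

/-!
Mixing `α_X` with the point mass at `x̂` splits the covariance as
`V_H = (1 - α_x̂) (V_G + α_x̂ v vᵀ)` with `v = x̂ - μ_G`. As `x̂` spans the kernel of `V_G` and
`x̂ᵀ V_G⁺ = 0`, the matrix `K = (1 - α_x̂) W` satisfies `V_G K = 1 - v x̂ᵀ` and `vᵀ K = x̂ᵀ / α_x̂`.
Hence `(V_G + α_x̂ v vᵀ) K = 1`, and `vᵀ K v = (x̂ · v) / α_x̂ = 1 / α_x̂`.
-/

theorem sum_smul_eq_smul_sum_div_smul {ι K M : Type*} [Field K] [AddCommMonoid M] [Module K M]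
    (s : Finset ι) (w : ι → K) (f : ι → M) {c : K} (hc : c ≠ 0) :
    ∑ i ∈ s, w i • f i = c • ∑ i ∈ s, (w i / c) • f i := by
  rw [smul_sum]
  exact sum_congr rfl fun i _ => by rw [smul_smul, mul_div_cancel₀ _ hc]

theorem variance_decomposition {n R : Type*} [CommRing R] (G : Matrix n n R) (y μ : n → R)
    (a : R) :
    a • vecMulVec y y + (1 - a) • G - vecMulVec (a • y + (1 - a) • μ) (a • y + (1 - a) • μ) =
      (1 - a) • (G - vecMulVec μ μ + a • vecMulVec (y - μ) (y - μ)) := by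
  ext i j
  simp only [Matrix.add_apply, Matrix.sub_apply, Matrix.smul_apply, vecMulVec_apply,
    Pi.add_apply, Pi.sub_apply, Pi.smul_apply, smul_eq_mul]
  ring

section

variable {n : Type*} [Fintype n]

theorem vecMul_eq_zero_of_mulVec_eq_zero {R : Type*} [CommRing R] {A P : Matrix n n R}
    {y : n → R} (hPAP : P * A * P = P) (hPA : (P * A)ᵀ = P * A) (hAy : A *ᵥ y = 0) :
    y ᵥ* P = 0 :=
  calc y ᵥ* P = y ᵥ* (P * A) ᵥ* P := by rw [vecMul_vecMul, hPAP]
    _ = ((P * A) *ᵥ y) ᵥ* P := by rw [← mulVec_transpose (P * A) y, hPA]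
    _ = 0 := by rw [← mulVec_mulVec, hAy, mulVec_zero, zero_vecMul]

variable {K : Type*} [Field K]

/-- With `P = V_G⁺`, `y = x̂`, `μ = μ_G` and `a = α_x̂`, this is `(1 - α_x̂) V_H(α)⁻¹`. -/
def pinvRankOneUpdate (P : Matrix n n K) (y μ : n → K) (a : K) : Matrix n n K :=
  P + vecMulVec (P *ᵥ μ) y + vecMulVec y (μ ᵥ* P) + (μ ⬝ᵥ P *ᵥ μ + 1 / a) • vecMulVec y y

variable {A P : Matrix n n K} {y μ : n → K}

theorem mul_pinvRankOneUpdate [DecidableEq n] (a : K) (hAP : A * P = 1 - vecMulVec y y)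
    (hAy : A *ᵥ y = 0) (hμy : μ ⬝ᵥ y = 0) :
    A * pinvRankOneUpdate P y μ a = 1 - vecMulVec (y - μ) y := by
  have hAPμ : A *ᵥ P *ᵥ μ = μ := by
    rw [mulVec_mulVec, hAP, sub_mulVec, one_mulVec, vecMulVec_mulVec, dotProduct_comm, hμy]
    simp
  rw [pinvRankOneUpdate, mul_add, mul_add, mul_add, Matrix.mul_smul, hAP, mul_vecMulVec,
    mul_vecMulVec, mul_vecMulVec, hAPμ, hAy, sub_vecMulVec]
  simp only [zero_vecMulVec, smul_zero, add_zero]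
  abel

theorem vecMul_pinvRankOneUpdate (a : K) (hyP : y ᵥ* P = 0) (hyy : y ⬝ᵥ y = 1)
    (hμy : μ ⬝ᵥ y = 0) :
    (y - μ) ᵥ* pinvRankOneUpdate P y μ a = a⁻¹ • y := by
  have hvP : (y - μ) ᵥ* P = -(μ ᵥ* P) := by rw [sub_vecMul, hyP, zero_sub]
  have hvPμ : (y - μ) ⬝ᵥ P *ᵥ μ = -(μ ⬝ᵥ P *ᵥ μ) := by
    rw [dotProduct_mulVec, hvP, neg_dotProduct, ← dotProduct_mulVec]
  have hvy : (y - μ) ⬝ᵥ y = 1 := by rw [sub_dotProduct, hyy, hμy, sub_zero]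
  rw [pinvRankOneUpdate, vecMul_add, vecMul_add, vecMul_add, vecMul_smul, vecMul_vecMulVec,
    vecMul_vecMulVec, vecMul_vecMulVec, hvP, hvPμ, hvy]
  module

theorem add_smul_vecMulVec_mul_pinvRankOneUpdate [DecidableEq n] {a : K} (ha : a ≠ 0)
    (hAP : A * P = 1 - vecMulVec y y) (hAy : A *ᵥ y = 0) (hyP : y ᵥ* P = 0)
    (hyy : y ⬝ᵥ y = 1) (hμy : μ ⬝ᵥ y = 0) :
    (A + a • vecMulVec (y - μ) (y - μ)) * pinvRankOneUpdate P y μ a = 1 := by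
  rw [add_mul, smul_mul, vecMulVec_mul, vecMul_pinvRankOneUpdate a hyP hyy hμy,
    mul_pinvRankOneUpdate a hAP hAy hμy, vecMulVec_smul, smul_smul, mul_inv_cancel₀ ha, one_smul,
    sub_add_cancel]

end

theorem variance_inverse_formula_general {d : ℕ} {ι : Type*} [Fintype ι]
    (x : ι → Fin (d+1) → ℝ) (w : ι → ℝ) (a : ℝ)
    (ha0 : 0 < a) (ha1 : a < 1)
    (xhat : Fin (d+1) → ℝ) (hxhat : xhat = fun k => if k = Fin.last d then 1 else 0)
    (hperp : ∀ i, dotProduct (x i) xhat = 0)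
    (μG : Fin (d+1) → ℝ) (hμG : μG = ∑ i, (w i / (1 - a)) • x i)
    (G : Matrix (Fin (d+1)) (Fin (d+1)) ℝ)
    (hG : G = ∑ i, (w i / (1 - a)) • Matrix.vecMulVec (x i) (x i))
    (μH : Fin (d+1) → ℝ) (hμH : μH = a • xhat + ∑ i, w i • x i)
    (H : Matrix (Fin (d+1)) (Fin (d+1)) ℝ)
    (hH : H = a • Matrix.vecMulVec xhat xhat + ∑ i, w i • Matrix.vecMulVec (x i) (x i))
    (VG VH : Matrix (Fin (d+1)) (Fin (d+1)) ℝ)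
    (hVG : VG = G - Matrix.vecMulVec μG μG)
    (hVH : VH = H - Matrix.vecMulVec μH μH)
    -- `VGp` is the Moore–Penrose pseudo-inverse of `VG`; the rank-(d-1)
    -- assumption gives exactly the following identities:
    (VGp : Matrix (Fin (d+1)) (Fin (d+1)) ℝ)
    (hMP2 : VGp * VG * VGp = VGp)
    (hMP4 : (VGp * VG)ᵀ = VGp * VG)
    (hrank : VG * VGp = 1 - Matrix.vecMulVec xhat xhat)
    (hVGx : VG.mulVec xhat = 0)
    (W : Matrix (Fin (d+1)) (Fin (d+1)) ℝ)
    (hW : W = (1 / (1 - a)) •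
      (VGp + Matrix.vecMulVec (VGp.mulVec μG) xhat
        + Matrix.vecMulVec xhat (Matrix.vecMul μG VGp)
        + (dotProduct μG (VGp.mulVec μG) + 1 / a) • Matrix.vecMulVec xhat xhat)) :
    VH * W = 1 ∧ W * VH = 1 ∧
      dotProduct (xhat - μG) (W.mulVec (xhat - μG)) = 1 / ((1 - a) * a) := by
  have hb : (1 : ℝ) - a ≠ 0 := by linarith
  have hWK : W = (1 - a)⁻¹ • pinvRankOneUpdate VGp xhat μG a := by rw [hW, one_div]; rfl
  have hxx : xhat ⬝ᵥ xhat = 1 := by simp [hxhat, dotProduct]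
  have hμx : μG ⬝ᵥ xhat = 0 := by simp [hμG, sum_dotProduct, smul_dotProduct, hperp]
  have hxP : xhat ᵥ* VGp = 0 := vecMul_eq_zero_of_mulVec_eq_zero hMP2 hMP4 hVGx
  have hVH : VH = (1 - a) • (VG + a • vecMulVec (xhat - μG) (xhat - μG)) := by
    rw [hVH, hH, hμH, sum_smul_eq_smul_sum_div_smul _ _ _ hb, ← hG,
      sum_smul_eq_smul_sum_div_smul _ _ _ hb, ← hμG, variance_decomposition, hVG,
      sub_add_eq_add_sub]
  have hVHW : VH * W = 1 := by
    rw [hVH, hWK, smul_mul_smul_comm, mul_inv_cancel₀ hb, one_smul,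
      add_smul_vecMulVec_mul_pinvRankOneUpdate ha0.ne' hrank hVGx hxP hxx hμx]
  refine ⟨hVHW, mul_eq_one_comm.1 hVHW, ?_⟩
  have hxv : xhat ⬝ᵥ (xhat - μG) = 1 := by
    rw [dotProduct_sub, hxx, dotProduct_comm, hμx, sub_zero]
  rw [hWK, dotProduct_mulVec, vecMul_smul, vecMul_pinvRankOneUpdate a hxP hxx hμx, smul_dotProduct,
    smul_dotProduct, hxv, smul_eq_mul, smul_eq_mul, mul_one, one_div, mul_inv]

/-- Inverse formula for `V_H(α)` (second part of Lemma "logdet lemma 1"),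
together with the norm identity `‖x̂ - μ_G‖²_{V_H⁻¹} = 1/((1-a)a)`. -/
theorem variance_inverse_formula {d : ℕ} {ι : Type*} [Fintype ι]
    (x : ι → Fin (d+1) → ℝ) (w : ι → ℝ) (a : ℝ)
    (hw : ∀ i, 0 ≤ w i) (ha0 : 0 < a) (ha1 : a < 1)
    (hsum : ∑ i, w i = 1 - a)
    (xhat : Fin (d+1) → ℝ) (hxhat : xhat = fun k => if k = Fin.last d then 1 else 0)
    (hperp : ∀ i, dotProduct (x i) xhat = 0)
    (μG : Fin (d+1) → ℝ) (hμG : μG = ∑ i, (w i / (1 - a)) • x i)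
    (G : Matrix (Fin (d+1)) (Fin (d+1)) ℝ)
    (hG : G = ∑ i, (w i / (1 - a)) • Matrix.vecMulVec (x i) (x i))
    (μH : Fin (d+1) → ℝ) (hμH : μH = a • xhat + ∑ i, w i • x i)
    (H : Matrix (Fin (d+1)) (Fin (d+1)) ℝ)
    (hH : H = a • Matrix.vecMulVec xhat xhat + ∑ i, w i • Matrix.vecMulVec (x i) (x i))
    (VG VH : Matrix (Fin (d+1)) (Fin (d+1)) ℝ)
    (hVG : VG = G - Matrix.vecMulVec μG μG)
    (hVH : VH = H - Matrix.vecMulVec μH μH)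
    -- `VGp` is the Moore–Penrose pseudo-inverse of `VG`; the rank-(d-1)
    -- assumption gives exactly the following identities:
    (VGp : Matrix (Fin (d+1)) (Fin (d+1)) ℝ)
    (hMP1 : VG * VGp * VG = VG) (hMP2 : VGp * VG * VGp = VGp)
    (hMP3 : (VG * VGp)ᵀ = VG * VGp) (hMP4 : (VGp * VG)ᵀ = VGp * VG)
    (hrank : VG * VGp = 1 - Matrix.vecMulVec xhat xhat)
    (hVGx : VG.mulVec xhat = 0) (hVGpx : VGp.mulVec xhat = 0)
    (W : Matrix (Fin (d+1)) (Fin (d+1)) ℝ)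
    (hW : W = (1 / (1 - a)) •
      (VGp + Matrix.vecMulVec (VGp.mulVec μG) xhat
        + Matrix.vecMulVec xhat (Matrix.vecMul μG VGp)
        + (dotProduct μG (VGp.mulVec μG) + 1 / a) • Matrix.vecMulVec xhat xhat)) :
    VH * W = 1 ∧ W * VH = 1 ∧
      dotProduct (xhat - μG) (W.mulVec (xhat - μG)) = 1 / ((1 - a) * a) :=
  variance_inverse_formula_general x w a ha0 ha1 xhat hxhat hperp μG hμG G hG μH hμH H hH VG VH hVG
    hVH VGp hMP2 hMP4 hrank hVGx W hW
end

section
/- Consider the optimistic FTRL iterates p_t = argmin over p ∈ Ω of (⟨p, Σ_{τ<t} ℓ_τ + m_t⟩ + ψ_t(p)) on a compact convex set Ω. For any u ∈ Ω and any time t′: Σ_{t=1}^{t′} ⟨p_t - u, ℓ_t⟩ ≤ ψ_0(u) - min_{p∈Ω} ψ_0(p) + Σ_{t=1}^{t′} (ψ_t(u) - ψ_{t-1}(u) - ψ_t(p_t) + ψ_{t-1}(p_t)) + Σ_{t=1}^{t′} max over p ∈ Ω of (⟨p_t - p, ℓ_t - m_t⟩ - D_{ψ_t}(p, p_t)). 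-/
open Finset
open scoped RealInnerProductSpace

/-!
Write `L_T = ∑_{t ≤ T} ℓ_t` and `F_T(v) = ⟪v, L_T⟫ + ψ_T(v)`. By induction on `T`, for every
`v ∈ Ω`,
`∑_{t ≤ T} (⟪p_t, ℓ_t⟫ + ψ_t(p_t) - ψ_{t-1}(p_t) - δ_t) ≤ F_T(v) - min ψ_0`,
where `δ_t` bounds the stability term. For the step to `T + 1` one applies the hypothesis at
`v = p_{T+1}`; what remains is `F_{T+1}(p_{T+1}) - δ_{T+1} ≤ F_{T+1}(v)`, and after expanding
`δ_{T+1}` at `v` this is the first-order optimality condition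
`⟪L_T + m_{T+1} + ∇ψ_{T+1}(p_{T+1}), v - p_{T+1}⟫ ≥ 0` of the optimistic iterate. Taking
`v = u` and telescoping `ψ_t(u) - ψ_{t-1}(u)` gives the regret bound.
-/

theorem Finset.sum_Icc_one_sub_pred (f : ℕ → ℝ) (T : ℕ) :
    ∑ t ∈ Icc 1 T, (f t - f (t - 1)) = f T - f 0 := by
  induction T with
  | zero => simp
  | succ T ih => rw [sum_Icc_succ_top (by omega), ih, Nat.add_sub_cancel]; ring

section

variable {E : Type*} [NormedAddCommGroup E] [InnerProductSpace ℝ E] [CompleteSpace E]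

/-- `G` plays the role of the gradient of `ψ` at `y`. -/
def bregmanDiv (ψ : E → ℝ) (G x y : E) : ℝ := ψ x - ψ y - ⟪G, x - y⟫

theorem HasGradientAt.inner_const_add {ψ : E → ℝ} {c G x : E} (hψ : HasGradientAt ψ G x) :
    HasGradientAt (fun q => ⟪q, c⟫ + ψ q) (c + G) x := by
  have h := (InnerProductSpace.toDual ℝ E c).hasFDerivAt.add hψ.hasFDerivAt (x := x)
  rw [← map_add] at h
  have hfun : (fun q => ⟪q, c⟫ + ψ q) = ⇑(InnerProductSpace.toDual ℝ E c) + ψ := by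
    ext q; simp [real_inner_comm c]
  rwa [hfun]

theorem IsMinOn.inner_gradient_nonneg {Ω : Set E} (hΩ : Convex ℝ Ω) {f : E → ℝ} {x G : E}
    (hf : HasGradientAt f G x) (hmin : IsMinOn f Ω x) (hx : x ∈ Ω) {v : E} (hv : v ∈ Ω) :
    0 ≤ ⟪G, v - x⟫ := by
  simpa using hmin.localize.hasFDerivWithinAt_nonneg hf.hasFDerivAt.hasFDerivWithinAt
    (sub_mem_posTangentConeAt_of_segment_subset (hΩ.segment_subset hx hv))

theorem optimistic_ftrl_step_le {Ω : Set E} (hΩ : Convex ℝ Ω) {ψ : E → ℝ} {S ℓ m P G v : E}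
    (hψ : HasGradientAt ψ G P) (hP : P ∈ Ω)
    (hmin : ∀ q ∈ Ω, ⟪P, S + m⟫ + ψ P ≤ ⟪q, S + m⟫ + ψ q) (hv : v ∈ Ω) :
    ⟪P, S + ℓ⟫ + ψ P - (⟪P - v, ℓ - m⟫ - bregmanDiv ψ G v P) ≤ ⟪v, S + ℓ⟫ + ψ v := by
  have hvar : 0 ≤ ⟪S + m + G, v - P⟫ :=
    IsMinOn.inner_gradient_nonneg hΩ hψ.inner_const_add hmin hP hv
  simp only [bregmanDiv, inner_add_right, inner_sub_left, inner_sub_right,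
    real_inner_comm P, real_inner_comm v] at hvar ⊢
  linarith

variable {Ω : Set E} {ψ : ℕ → E → ℝ} {ℓ m p g : ℕ → E} {δ : ℕ → ℝ} {I : ℝ}

theorem optimistic_ftrl_cumulative_le (hΩ : Convex ℝ Ω)
    (hg : ∀ t, HasGradientAt (ψ t) (g t) (p t))
    (hp : ∀ t, 1 ≤ t → p t ∈ Ω ∧ ∀ q ∈ Ω,
      ⟪p t, (∑ τ ∈ Icc 1 (t - 1), ℓ τ) + m t⟫ + ψ t (p t)
        ≤ ⟪q, (∑ τ ∈ Icc 1 (t - 1), ℓ τ) + m t⟫ + ψ t q)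
    (hδ : ∀ t, 1 ≤ t → ∀ q ∈ Ω, ⟪p t - q, ℓ t - m t⟫ - bregmanDiv (ψ t) (g t) q (p t) ≤ δ t)
    (hI : ∀ q ∈ Ω, I ≤ ψ 0 q) (T : ℕ) {v : E} (hv : v ∈ Ω) :
    ∑ t ∈ Icc 1 T, (⟪p t, ℓ t⟫ + (ψ t (p t) - ψ (t - 1) (p t)) - δ t)
      ≤ ⟪v, ∑ t ∈ Icc 1 T, ℓ t⟫ + ψ T v - I := by
  induction T generalizing v with
  | zero => simpa using hI v hv
  | succ T ih =>
    obtain ⟨hpΩ, hpmin⟩ := hp (T + 1) T.succ_pos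
    rw [Nat.add_sub_cancel] at hpmin
    have hstep := optimistic_ftrl_step_le (ℓ := ℓ (T + 1)) hΩ (hg (T + 1)) hpΩ hpmin hv
    have hδv := hδ (T + 1) T.succ_pos v hv
    have hih := ih hpΩ
    rw [sum_Icc_succ_top (by omega), sum_Icc_succ_top (by omega), Nat.add_sub_cancel]
    simp only [inner_add_right] at hstep ⊢
    linarith

theorem optimistic_ftrl_regret_le (hΩ : Convex ℝ Ω)
    (hg : ∀ t, HasGradientAt (ψ t) (g t) (p t))
    (hp : ∀ t, 1 ≤ t → p t ∈ Ω ∧ ∀ q ∈ Ω,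
      ⟪p t, (∑ τ ∈ Icc 1 (t - 1), ℓ τ) + m t⟫ + ψ t (p t)
        ≤ ⟪q, (∑ τ ∈ Icc 1 (t - 1), ℓ τ) + m t⟫ + ψ t q)
    (hδ : ∀ t, 1 ≤ t → ∀ q ∈ Ω, ⟪p t - q, ℓ t - m t⟫ - bregmanDiv (ψ t) (g t) q (p t) ≤ δ t)
    (hI : ∀ q ∈ Ω, I ≤ ψ 0 q) {u : E} (hu : u ∈ Ω) (T : ℕ) :
    ∑ t ∈ Icc 1 T, ⟪p t - u, ℓ t⟫
      ≤ ψ 0 u - I + ∑ t ∈ Icc 1 T, (ψ t u - ψ (t - 1) u - ψ t (p t) + ψ (t - 1) (p t))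
        + ∑ t ∈ Icc 1 T, δ t := by
  have hcum := optimistic_ftrl_cumulative_le hΩ hg hp hδ hI T hu
  have htel := sum_Icc_one_sub_pred (fun t => ψ t u) T
  simp only [inner_sub_left, sum_sub_distrib, sum_add_distrib, inner_sum] at hcum htel ⊢
  linarith

end

theorem optimistic_ftrl_regret_general {K : ℕ}
    (Ω : Set (EuclideanSpace ℝ (Fin K)))
    (hΩc : IsCompact Ω) (hΩconv : Convex ℝ Ω)
    (ψ : ℕ → EuclideanSpace ℝ (Fin K) → ℝ)
    (g : ℕ → EuclideanSpace ℝ (Fin K) → EuclideanSpace ℝ (Fin K))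
    (hg : ∀ t q, HasGradientAt (ψ t) (g t q) q)
    (ℓ m : ℕ → EuclideanSpace ℝ (Fin K))
    (p : ℕ → EuclideanSpace ℝ (Fin K))
    (hp : ∀ t, 1 ≤ t → p t ∈ Ω ∧ ∀ q ∈ Ω,
      ⟪p t, (∑ τ ∈ Finset.Icc 1 (t-1), ℓ τ) + m t⟫ + ψ t (p t)
        ≤ ⟪q, (∑ τ ∈ Finset.Icc 1 (t-1), ℓ τ) + m t⟫ + ψ t q)
    (u : EuclideanSpace ℝ (Fin K)) (hu : u ∈ Ω) (t' : ℕ) :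
    ∑ t ∈ Finset.Icc 1 t', ⟪p t - u, ℓ t⟫
    ≤ ψ 0 u - sInf (ψ 0 '' Ω)
      + ∑ t ∈ Finset.Icc 1 t', (ψ t u - ψ (t-1) u - ψ t (p t) + ψ (t-1) (p t))
      + ∑ t ∈ Finset.Icc 1 t',
          sSup ((fun q => ⟪p t - q, ℓ t - m t⟫
            - (ψ t q - ψ t (p t) - ⟪g t (p t), q - p t⟫)) '' Ω) := by
  have hψc : ∀ t, Continuous (ψ t) := fun t =>
    Differentiable.continuous fun q => (hg t q).differentiableAt
  refine optimistic_ftrl_regret_le hΩconv (fun t => hg t (p t)) hp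
    (fun t _ q hq => le_csSup (hΩc.image ?_).bddAbove ⟨q, hq, rfl⟩)
    (fun q hq => csInf_le (hΩc.image (hψc 0)).bddBelow ⟨q, hq, rfl⟩) hu t'
  have := hψc t
  unfold bregmanDiv
  fun_prop

/-- Regret bound for optimistic FTRL (Lemma "FTRL"). -/
theorem optimistic_ftrl_regret {K : ℕ}
    (Ω : Set (EuclideanSpace ℝ (Fin K))) (hΩne : Ω.Nonempty)
    (hΩc : IsCompact Ω) (hΩconv : Convex ℝ Ω)
    (ψ : ℕ → EuclideanSpace ℝ (Fin K) → ℝ)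
    (g : ℕ → EuclideanSpace ℝ (Fin K) → EuclideanSpace ℝ (Fin K))
    (hg : ∀ t q, HasGradientAt (ψ t) (g t q) q)
    (hψconv : ∀ t, StrictConvexOn ℝ Ω (ψ t))
    (ℓ m : ℕ → EuclideanSpace ℝ (Fin K))
    (p : ℕ → EuclideanSpace ℝ (Fin K))
    (hp : ∀ t, 1 ≤ t → p t ∈ Ω ∧ ∀ q ∈ Ω,
      ⟪p t, (∑ τ ∈ Finset.Icc 1 (t-1), ℓ τ) + m t⟫ + ψ t (p t)
        ≤ ⟪q, (∑ τ ∈ Finset.Icc 1 (t-1), ℓ τ) + m t⟫ + ψ t q)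
    (u : EuclideanSpace ℝ (Fin K)) (hu : u ∈ Ω) (t' : ℕ) :
    ∑ t ∈ Finset.Icc 1 t', ⟪p t - u, ℓ t⟫
    ≤ ψ 0 u - sInf (ψ 0 '' Ω)
      + ∑ t ∈ Finset.Icc 1 t', (ψ t u - ψ (t-1) u - ψ t (p t) + ψ (t-1) (p t))
      + ∑ t ∈ Finset.Icc 1 t',
          sSup ((fun q => ⟪p t - q, ℓ t - m t⟫
            - (ψ t q - ψ t (p t) - ⟪g t (p t), q - p t⟫)) '' Ω) :=
  optimistic_ftrl_regret_general Ω hΩc hΩconv ψ g hg ℓ m p hp u hu t'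
end

section
/- Let c₁ > 0 and weights q_1, ..., q_{t′} ∈ (0,1]. Define b_t = c₁^{1/3}·((Σ_{τ=1}^t q_τ^{-1/2})^{2/3} - (Σ_{τ=1}^{t-1} q_τ^{-1/2})^{2/3}). Then: (a) b_t ≤ c₁^{1/3}·q_t^{-1/2}·(Σ_{τ=1}^t q_τ^{-1/2})^{-1/3} ≤ (c₁/q_t)^{1/3}, and (b) Σ_{t=1}^{t′} q_t·b_t ≤ c₁^{1/3}·(Σ_{t=1}^{t′} q_t^{-1/2}/Σ_{τ≤t} q_τ^{-1/2})^{1/3}·(Σ_{t=1}^{t′} q_t)^{2/3} ≤ c₁^{1/3}·(1 + log(Σ_{t=1}^{t′} q_t^{-1}))^{1/3}·(Σ_{t=1}^{t′} q_t)^{2/3} (Hölder's inequality with exponents 3 and 3/2, plus the harmonic-log bound). -/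
/-!
By concavity, the increment of `x ↦ x ^ (2/3)` along the partial sums
`S t = ∑ τ ≤ t, q τ ^ (-1/2)` is at most the step `q t ^ (-1/2)` times `S t ^ (-1/3)`; since
`S t ≥ q t ^ (-1/2)` this gives (a). Weighted by `q t`, the bound is
`(q t ^ (-1/2) / S t) ^ (1/3) * q t ^ (2/3)`, so Hölder with exponents `3` and `3/2` gives the
first inequality of (b). For the second, `a / (A + a) ≤ log (A + a) - log A` makes
`∑ q t ^ (-1/2) / S t` telescope against `log S t'`, and `S t' ≤ ∑ (q t)⁻¹` because `q t ≤ 1`.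
-/

open Finset Real

namespace Real

theorem mul_rpow_sub_one_le_rpow {x S p : ℝ} (hx : 0 < x) (hxS : x ≤ S) (hp : p ≤ 1) :
    x * S ^ (p - 1) ≤ x ^ p :=
  calc x * S ^ (p - 1) ≤ x * x ^ (p - 1) :=
        mul_le_mul_of_nonneg_left (rpow_le_rpow_of_nonpos hx hxS (by linarith)) hx.le
    _ = x ^ p := by rw [rpow_sub_one hx.ne', mul_div_cancel₀ _ hx.ne']

theorem add_rpow_sub_rpow_le {B a p : ℝ} (hB : 0 ≤ B) (ha : 0 < a) (hp : p ≤ 1) :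
    (B + a) ^ p - B ^ p ≤ a * (B + a) ^ (p - 1) := by
  have hBa : 0 < B + a := by linarith
  have hB_le : B * (B + a) ^ (p - 1) ≤ B ^ p := by
    rcases hB.eq_or_lt with rfl | hB
    · simpa using rpow_nonneg le_rfl p
    exact mul_rpow_sub_one_le_rpow hB (by linarith) hp
  have hBa_eq : (B + a) ^ p = (B + a) * (B + a) ^ (p - 1) := by
    rw [rpow_sub_one hBa.ne', mul_div_cancel₀ _ hBa.ne']
  rw [hBa_eq, add_mul]
  linarith

theorem sum_rpow_mul_rpow_le {ι : Type*} (s : Finset ι) {f g : ι → ℝ} {θ η : ℝ}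
    (hθ : 0 < θ) (hη : 0 < η) (hθη : θ + η = 1)
    (hf : ∀ i ∈ s, 0 ≤ f i) (hg : ∀ i ∈ s, 0 ≤ g i) :
    ∑ i ∈ s, f i ^ θ * g i ^ η ≤ (∑ i ∈ s, f i) ^ θ * (∑ i ∈ s, g i) ^ η := by
  have h := inner_le_Lp_mul_Lq_of_nonneg s (HolderConjugate.inv_inv hθ hη hθη)
    (fun i hi => rpow_nonneg (hf i hi) θ) (fun i hi => rpow_nonneg (hg i hi) η)
  simp only [one_div, inv_inv] at h
  convert h using 4 with i hi i hi
  · exact (rpow_rpow_inv (hf i hi) hθ.ne').symm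
  · exact (rpow_rpow_inv (hg i hi) hη.ne').symm

theorem div_add_le_log_add_sub_log {A a : ℝ} (hA : 0 < A) (ha : 0 ≤ a) :
    a / (A + a) ≤ log (A + a) - log A := by
  have hAa : 0 < A + a := by linarith
  have h := one_sub_inv_le_log_of_pos (div_pos hAa hA)
  rwa [log_div hAa.ne' hA.ne', inv_div, one_sub_div hAa.ne', add_sub_cancel_left] at h

end Real

theorem sum_div_sum_Icc_le_one_add_log (a : ℕ → ℝ) (ha : ∀ t, 0 < a t) (T : ℕ) :
    ∑ t ∈ Icc 1 T, a t / ∑ τ ∈ Icc 1 t, a τ ≤ 1 + log ((∑ τ ∈ Icc 1 T, a τ) / a 1) := by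
  rcases Nat.eq_zero_or_pos T with rfl | hT
  · simp
  induction T, hT using Nat.le_induction with
  | base => simp [(ha 1).ne']
  | succ n hn ih =>
    have hA : 0 < ∑ τ ∈ Icc 1 n, a τ := sum_pos (fun i _ => ha i) ⟨1, mem_Icc.2 ⟨le_rfl, hn⟩⟩
    have hA' : 0 < ∑ τ ∈ Icc 1 n, a τ + a (n + 1) := by linarith [ha (n + 1)]
    have hstep := div_add_le_log_add_sub_log hA (ha (n + 1)).le
    rw [sum_Icc_succ_top (by omega), sum_Icc_succ_top (by omega), log_div hA'.ne' (ha 1).ne']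
    rw [log_div hA.ne' (ha 1).ne'] at ih
    linarith

theorem rpow_sum_Icc_sub_le {r : ℕ → ℝ} (hr : ∀ t, 0 ≤ r t) {t : ℕ} (ht : 1 ≤ t) (hrt : 0 < r t)
    {p : ℝ} (hp : p ≤ 1) :
    (∑ τ ∈ Icc 1 t, r τ) ^ p - (∑ τ ∈ Icc 1 (t - 1), r τ) ^ p
      ≤ r t * (∑ τ ∈ Icc 1 t, r τ) ^ (p - 1) := by
  obtain ⟨n, rfl⟩ : ∃ n, t = n + 1 := ⟨t - 1, by omega⟩
  rw [Nat.add_sub_cancel, sum_Icc_succ_top (by omega)]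
  exact add_rpow_sub_rpow_le (sum_nonneg fun i _ => hr i) hrt hp

section InverseSqrtWeights

variable {q : ℕ → ℝ}

theorem sum_Icc_rpow_neg_half_pos (hq : ∀ t, 0 < q t) {t : ℕ} (ht : 1 ≤ t) :
    0 < ∑ τ ∈ Icc 1 t, q τ ^ (-(1:ℝ)/2) :=
  sum_pos (fun i _ => rpow_pos_of_pos (hq i) _) ⟨t, mem_Icc.2 ⟨ht, le_rfl⟩⟩

theorem rpow_neg_half_mul_rpow_sum_Icc_le (hq : ∀ t, 0 < q t) {t : ℕ} (ht : 1 ≤ t) :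
    q t ^ (-(1:ℝ)/2) * (∑ τ ∈ Icc 1 t, q τ ^ (-(1:ℝ)/2)) ^ (-(1:ℝ)/3) ≤ q t ^ (-(1/3:ℝ)) := by
  have hrt : q t ^ (-(1:ℝ)/2) ≤ ∑ τ ∈ Icc 1 t, q τ ^ (-(1:ℝ)/2) :=
    single_le_sum (fun i _ => (rpow_pos_of_pos (hq i) _).le) (mem_Icc.2 ⟨ht, le_rfl⟩)
  rw [show -(1:ℝ)/3 = 2/3 - 1 by norm_num]
  calc q t ^ (-(1:ℝ)/2) * (∑ τ ∈ Icc 1 t, q τ ^ (-(1:ℝ)/2)) ^ ((2:ℝ)/3 - 1)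
      ≤ (q t ^ (-(1:ℝ)/2)) ^ ((2:ℝ)/3) :=
        mul_rpow_sub_one_le_rpow (rpow_pos_of_pos (hq t) _) hrt (by norm_num)
    _ = q t ^ (-(1/3:ℝ)) := by rw [← rpow_mul (hq t).le]; norm_num

theorem mul_rpow_neg_half_mul_rpow_sum_Icc (hq : ∀ t, 0 < q t) {t : ℕ} (ht : 1 ≤ t) :
    q t * (q t ^ (-(1:ℝ)/2) * (∑ τ ∈ Icc 1 t, q τ ^ (-(1:ℝ)/2)) ^ (-(1:ℝ)/3))
      = (q t ^ (-(1:ℝ)/2) / ∑ τ ∈ Icc 1 t, q τ ^ (-(1:ℝ)/2)) ^ ((1:ℝ)/3) * q t ^ ((2:ℝ)/3) := by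
  have hS := sum_Icc_rpow_neg_half_pos hq ht
  have hsqrt : q t * q t ^ (-(1:ℝ)/2) = (q t ^ (-(1:ℝ)/2)) ^ ((1:ℝ)/3) * q t ^ ((2:ℝ)/3) := by
    rw [mul_comm, ← rpow_add_one (hq t).ne', ← rpow_mul (hq t).le, ← rpow_add (hq t)]
    norm_num
  rw [show -(1:ℝ)/3 = -(1/3) by norm_num, rpow_neg hS.le, ← mul_assoc, hsqrt,
    div_rpow (rpow_pos_of_pos (hq t) _).le hS.le]
  ring

theorem sum_rpow_neg_half_div_sum_Icc_le_one_add_log (hq : ∀ t, 0 < q t ∧ q t ≤ 1) (T : ℕ) :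
    ∑ t ∈ Icc 1 T, q t ^ (-(1:ℝ)/2) / ∑ τ ∈ Icc 1 t, q τ ^ (-(1:ℝ)/2)
      ≤ 1 + log (∑ t ∈ Icc 1 T, (q t)⁻¹) := by
  have hq0 (t : ℕ) : 0 < q t := (hq t).1
  refine (sum_div_sum_Icc_le_one_add_log _ (fun t => rpow_pos_of_pos (hq0 t) _) T).trans
    (add_le_add le_rfl ?_)
  rcases Nat.eq_zero_or_pos T with rfl | hT
  · simp
  have hS := sum_Icc_rpow_neg_half_pos hq0 hT
  refine log_le_log (div_pos hS (rpow_pos_of_pos (hq0 1) _)) ?_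
  calc (∑ τ ∈ Icc 1 T, q τ ^ (-(1:ℝ)/2)) / q 1 ^ (-(1:ℝ)/2)
      ≤ ∑ τ ∈ Icc 1 T, q τ ^ (-(1:ℝ)/2) :=
        div_le_self hS.le (one_le_rpow_of_pos_of_le_one_of_nonpos (hq0 1) (hq 1).2 (by norm_num))
    _ ≤ ∑ t ∈ Icc 1 T, (q t)⁻¹ := sum_le_sum fun t _ => by
        rw [← rpow_neg_one]
        exact rpow_le_rpow_of_exponent_ge (hq0 t) (hq t).2 (by norm_num)

end InverseSqrtWeights

/-- Bounds on the 2/3-power bonus increments and their weighted sum. -/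
theorem two_thirds_bonus_bounds (c₁ : ℝ) (hc : 0 < c₁)
    (q : ℕ → ℝ) (t' : ℕ) (hq : ∀ t, 0 < q t ∧ q t ≤ 1)
    (b : ℕ → ℝ)
    (hb : ∀ t, b t = c₁ ^ ((1:ℝ)/3) *
      ((∑ τ ∈ Finset.Icc 1 t, (q τ) ^ (-(1:ℝ)/2)) ^ ((2:ℝ)/3)
        - (∑ τ ∈ Finset.Icc 1 (t - 1), (q τ) ^ (-(1:ℝ)/2)) ^ ((2:ℝ)/3))) :
    (∀ t ∈ Finset.Icc 1 t',
      b t ≤ c₁ ^ ((1:ℝ)/3) * (q t) ^ (-(1:ℝ)/2)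
              * (∑ τ ∈ Finset.Icc 1 t, (q τ) ^ (-(1:ℝ)/2)) ^ (-(1:ℝ)/3)
      ∧ c₁ ^ ((1:ℝ)/3) * (q t) ^ (-(1:ℝ)/2)
              * (∑ τ ∈ Finset.Icc 1 t, (q τ) ^ (-(1:ℝ)/2)) ^ (-(1:ℝ)/3)
          ≤ (c₁ / q t) ^ ((1:ℝ)/3))
    ∧ (∑ t ∈ Finset.Icc 1 t', q t * b t
        ≤ c₁ ^ ((1:ℝ)/3)
          * (∑ t ∈ Finset.Icc 1 t',
              (q t) ^ (-(1:ℝ)/2) / ∑ τ ∈ Finset.Icc 1 t, (q τ) ^ (-(1:ℝ)/2)) ^ ((1:ℝ)/3)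
          * (∑ t ∈ Finset.Icc 1 t', q t) ^ ((2:ℝ)/3))
    ∧ (c₁ ^ ((1:ℝ)/3)
          * (∑ t ∈ Finset.Icc 1 t',
              (q t) ^ (-(1:ℝ)/2) / ∑ τ ∈ Finset.Icc 1 t, (q τ) ^ (-(1:ℝ)/2)) ^ ((1:ℝ)/3)
          * (∑ t ∈ Finset.Icc 1 t', q t) ^ ((2:ℝ)/3)
        ≤ c₁ ^ ((1:ℝ)/3)
          * (1 + Real.log (∑ t ∈ Finset.Icc 1 t', (q t)⁻¹)) ^ ((1:ℝ)/3)
          * (∑ t ∈ Finset.Icc 1 t', q t) ^ ((2:ℝ)/3)) := by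
  have hq0 (t : ℕ) : 0 < q t := (hq t).1
  have hc3 : 0 ≤ c₁ ^ ((1:ℝ)/3) := rpow_nonneg hc.le _
  have hincr (t : ℕ) (ht : 1 ≤ t) : b t ≤ c₁ ^ ((1:ℝ)/3) * q t ^ (-(1:ℝ)/2)
      * (∑ τ ∈ Icc 1 t, q τ ^ (-(1:ℝ)/2)) ^ (-(1:ℝ)/3) := by
    rw [hb, mul_assoc, show -(1:ℝ)/3 = 2/3 - 1 by norm_num]
    exact mul_le_mul_of_nonneg_left (rpow_sum_Icc_sub_le (fun t => (rpow_pos_of_pos (hq0 t) _).le)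
      ht (rpow_pos_of_pos (hq0 t) _) (by norm_num)) hc3
  have hratio (t : ℕ) : 0 ≤ q t ^ (-(1:ℝ)/2) / ∑ τ ∈ Icc 1 t, q τ ^ (-(1:ℝ)/2) :=
    div_nonneg (rpow_nonneg (hq0 t).le _) (sum_nonneg fun i _ => rpow_nonneg (hq0 i).le _)
  refine ⟨fun t ht => ⟨hincr t (mem_Icc.1 ht).1, ?_⟩, ?_, ?_⟩
  · rw [div_rpow hc.le (hq0 t).le, div_eq_mul_inv (c₁ ^ _), ← rpow_neg (hq0 t).le, mul_assoc]
    exact mul_le_mul_of_nonneg_left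
      (rpow_neg_half_mul_rpow_sum_Icc_le hq0 (mem_Icc.1 ht).1) hc3
  · calc ∑ t ∈ Icc 1 t', q t * b t
        ≤ ∑ t ∈ Icc 1 t', c₁ ^ ((1:ℝ)/3) *
          ((q t ^ (-(1:ℝ)/2) / ∑ τ ∈ Icc 1 t, q τ ^ (-(1:ℝ)/2)) ^ ((1:ℝ)/3) * q t ^ ((2:ℝ)/3)) :=
          sum_le_sum fun t ht => by
            rw [← mul_rpow_neg_half_mul_rpow_sum_Icc hq0 (mem_Icc.1 ht).1, mul_left_comm,
              ← mul_assoc (c₁ ^ _)]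
            exact mul_le_mul_of_nonneg_left (hincr t (mem_Icc.1 ht).1) (hq0 t).le
      _ ≤ _ := by
          rw [← mul_sum, mul_assoc]
          exact mul_le_mul_of_nonneg_left (sum_rpow_mul_rpow_le _ (by norm_num) (by norm_num)
            (by norm_num) (fun t _ => hratio t) (fun t _ => (hq0 t).le)) hc3
  · refine mul_le_mul_of_nonneg_right (mul_le_mul_of_nonneg_left ?_ hc3)
      (rpow_nonneg (sum_nonneg fun t _ => (hq0 t).le) _)
    exact rpow_le_rpow (sum_nonneg fun t _ => hratio t)
      (sum_rpow_neg_half_div_sum_Icc_le_one_add_log hq t') (by norm_num)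
end
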